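/- Every element S of S = S1 ∪ S2 ∪ S3 ∪ S4 falls into exactly one of the following mutually exclusive cases: (i) S is supported only on basis vectors E_{I,J} with I ⊇ {m+1,…,m+r} (positions corresponding to G); (ii) S is supported only on basis vectors E_{I,J} with I ⊉ {m+1,…,m+r} (positions corresponding to F∖G); (iii) S falls into neither case (i) nor case (ii), and some coefficient of S at a basis vector E_{I,J} with I ⊉ {m+1,…,m+r} involves a variable c_{ij} (i.e., that coefficient does not lie in the subring generated by the y-variables). -/

import Mathlib

open MvPolynomial

namespace SM

/-- Variables of the ring `R`: `y`-variables indexed by `Fin m × Fin n` (inl)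
and `c`-variables indexed by `Fin r × Fin n` (inr). -/
abbrev Vars (m r n : ℕ) := (Fin m × Fin n) ⊕ (Fin r × Fin n)

/-- Variables of the ring `P`: `x`-variables indexed by `Fin K` (inl)
and `c`-variables indexed by `Fin r × Fin n` (inr). -/
abbrev XVars (K r n : ℕ) := Fin K ⊕ (Fin r × Fin n)

/-- The free module with basis indexed by pairs of finsets of rows and columns. -/
abbrev FreeMod (S : Type*) (a b : ℕ) := Finset (Fin a) × Finset (Fin b) → S

/-- The `(m+r) × n` matrix `D` obtained by stacking `Y = (y_{kj})` on top of `C = (c_{ij})`. -/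
noncomputable def Dmat (𝕂 : Type*) [Field 𝕂] (m r n : ℕ) :
    Matrix (Fin (m + r)) (Fin n) (MvPolynomial (Vars m r n) 𝕂) :=
  Matrix.of fun i j =>
    if h : (i : ℕ) < m then X (Sum.inl (⟨i, h⟩, j))
    else X (Sum.inr (⟨(i : ℕ) - m, by have := i.isLt; omega⟩, j))

/-- The minor of `A` on the rows `I` and columns `J`, when both have cardinality `k`
(and `0` otherwise). -/
noncomputable def minorOf {S : Type*} [CommRing S] {a b : ℕ} (k : ℕ)
    (A : Matrix (Fin a) (Fin b) S) (I : Finset (Fin a)) (J : Finset (Fin b)) : S :=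
  if h : I.card = k ∧ J.card = k then
    (Matrix.of fun s t : Fin k =>
      A ((I.orderIsoOfFin h.1 s : Fin a)) ((J.orderIsoOfFin h.2 t : Fin b))).det
  else 0

/-- The map `φ` sending `E_{I,J} ↦ |A_{I,J}|`. -/
noncomputable def phiMap {S : Type*} [CommRing S] {a b : ℕ} (k : ℕ)
    (A : Matrix (Fin a) (Fin b) S) (T : FreeMod S a b) : S :=
  ∑ p : Finset (Fin a) × Finset (Fin b), T p * minorOf k A p.1 p.2


/-- The standard basis vector `E_{I,J}` of the free module. -/
noncomputable def eVec {S : Type*} [CommRing S] {a b : ℕ}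
    (p : Finset (Fin a) × Finset (Fin b)) : FreeMod S a b := Pi.single p 1

/-- The set `{m+1, …, m+r}` of the last `r` row indices. -/
def lastRows (m r : ℕ) : Finset (Fin (m + r)) := Finset.univ.filter fun i => m ≤ (i : ℕ)

/-- The set `{1, …, m}` of the first `m` row indices. -/
def firstRows (m r : ℕ) : Finset (Fin (m + r)) := Finset.univ.filter fun i => (i : ℕ) < m

/-- The Laplace expansion, along the repeated row, of the determinant of the
`(r+2) × (r+2)` matrix obtained from `A_{I,J}` (with `|J| = r+2`) by adding an extra copy of
row `i`, viewed as an element of the free module: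
`∑_t (-1)^t d_{i, j_t} E_{I, J \ {j_t}}`. -/
noncomputable def s1El {S : Type*} [CommRing S] {a b : ℕ} (r : ℕ)
    (A : Matrix (Fin a) (Fin b) S) (i : Fin a) (I : Finset (Fin a)) (J : Finset (Fin b))
    (hJ : J.card = r + 2) : FreeMod S a b :=
  ∑ t : Fin (r + 2),
    ((-1 : S) ^ (t : ℕ) * A i (J.orderIsoOfFin hJ t)) •
      eVec (I, J.erase (J.orderIsoOfFin hJ t))

/-- The column analogue of `s1El`: the Laplace expansion, along the repeated column, of the
determinant of the matrix obtained from `A_{I,J}` (with `|I| = r+2`) by adding an extra copy of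
column `j`. -/
noncomputable def s2El {S : Type*} [CommRing S] {a b : ℕ} (r : ℕ)
    (A : Matrix (Fin a) (Fin b) S) (j : Fin b) (I : Finset (Fin a)) (J : Finset (Fin b))
    (hI : I.card = r + 2) : FreeMod S a b :=
  ∑ s : Fin (r + 2),
    ((-1 : S) ^ (s : ℕ) * A ((I.orderIsoOfFin hI s : Fin a)) j) •
      eVec (I.erase (I.orderIsoOfFin hI s), J)

/-- The Laplace expansion of `|A_{I,J}|` (with `|I| = |J| = r+2`) along its `p`-th row
(`0`-indexed), with the usual cofactor signs, viewed as an element of the free module. -/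
noncomputable def rowExp {S : Type*} [CommRing S] {a b : ℕ} (r : ℕ)
    (A : Matrix (Fin a) (Fin b) S) (I : Finset (Fin a)) (J : Finset (Fin b))
    (hI : I.card = r + 2) (hJ : J.card = r + 2) (p : Fin (r + 2)) : FreeMod S a b :=
  ∑ t : Fin (r + 2),
    ((-1 : S) ^ ((p : ℕ) + (t : ℕ)) *
        A ((I.orderIsoOfFin hI p : Fin a)) ((J.orderIsoOfFin hJ t : Fin b))) •
      eVec (I.erase (I.orderIsoOfFin hI p), J.erase (J.orderIsoOfFin hJ t))

/-- The Laplace expansion of `|A_{I,J}|` (with `|I| = |J| = r+2`) along its `q`-th column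
(`0`-indexed), with the usual cofactor signs, viewed as an element of the free module. -/
noncomputable def colExp {S : Type*} [CommRing S] {a b : ℕ} (r : ℕ)
    (A : Matrix (Fin a) (Fin b) S) (I : Finset (Fin a)) (J : Finset (Fin b))
    (hI : I.card = r + 2) (hJ : J.card = r + 2) (q : Fin (r + 2)) : FreeMod S a b :=
  ∑ s : Fin (r + 2),
    ((-1 : S) ^ ((s : ℕ) + (q : ℕ)) *
        A ((I.orderIsoOfFin hI s : Fin a)) ((J.orderIsoOfFin hJ q : Fin b))) •
      eVec (I.erase (I.orderIsoOfFin hI s), J.erase (J.orderIsoOfFin hJ q))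

/-- Kurano's Type I row syzygies `S1`. -/
def S1Set {S : Type*} [CommRing S] {a b : ℕ} (r : ℕ) (A : Matrix (Fin a) (Fin b) S) :
    Set (FreeMod S a b) :=
  {T | ∃ (I : Finset (Fin a)) (J : Finset (Fin b)) (_ : I.card = r + 1) (hJ : J.card = r + 2)
    (i : Fin a), i ∈ I ∧ T = s1El r A i I J hJ}

/-- Kurano's Type I column syzygies `S2`. -/
def S2Set {S : Type*} [CommRing S] {a b : ℕ} (r : ℕ) (A : Matrix (Fin a) (Fin b) S) :
    Set (FreeMod S a b) :=
  {T | ∃ (I : Finset (Fin a)) (J : Finset (Fin b)) (hI : I.card = r + 2) (_ : J.card = r + 1)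
    (j : Fin b), j ∈ J ∧ T = s2El r A j I J hI}

/-- The syzygies `S3`: differences of the Laplace expansions of `|A_{I,J}|` along its first row
and along its `h`-th row, `h ≥ 2` (here `0`-indexed, so `h ≥ 1`). -/
def S3Set {S : Type*} [CommRing S] {a b : ℕ} (r : ℕ) (A : Matrix (Fin a) (Fin b) S) :
    Set (FreeMod S a b) :=
  {T | ∃ (I : Finset (Fin a)) (J : Finset (Fin b)) (hI : I.card = r + 2) (hJ : J.card = r + 2)
    (h : Fin (r + 2)), 1 ≤ (h : ℕ) ∧ T = rowExp r A I J hI hJ 0 - rowExp r A I J hI hJ h}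

/-- The syzygies `S4`: differences of the Laplace expansions of `|A_{I,J}|` along its first row
and along its `k`-th column, `k ≥ 2` (here `0`-indexed, so `k ≥ 1`). -/
def S4Set {S : Type*} [CommRing S] {a b : ℕ} (r : ℕ) (A : Matrix (Fin a) (Fin b) S) :
    Set (FreeMod S a b) :=
  {T | ∃ (I : Finset (Fin a)) (J : Finset (Fin b)) (hI : I.card = r + 2) (hJ : J.card = r + 2)
    (k : Fin (r + 2)), 1 ≤ (k : ℕ) ∧ T = rowExp r A I J hI hJ 0 - colExp r A I J hI hJ k}

/-- The set `S'_1`: for `h ∈ {1,…,m}`, `I = {h} ∪ {m+1,…,m+r}` and `|J| = r+2`, the Laplace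
expansion along the repeated row `h`. -/
def S1'Set (𝕂 : Type*) [Field 𝕂] (m r n : ℕ) :
    Set (FreeMod (MvPolynomial (Vars m r n) 𝕂) (m + r) n) :=
  {T | ∃ (i : Fin (m + r)) (J : Finset (Fin n)) (hJ : J.card = r + 2),
    (i : ℕ) < m ∧ T = s1El r (Dmat 𝕂 m r n) i (insert i (lastRows m r)) J hJ}

/-- The set `S'_3`: for `|I| = |J| = r+2` with `|I ∩ {1,…,m}| = 2`, the difference of the Laplace
expansions of `|D_{I,J}|` along its two rows with index in `{1,…,m}` (which are the two smallest
rows of `I`, i.e. positions `0` and `1`). -/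
def S3'Set (𝕂 : Type*) [Field 𝕂] (m r n : ℕ) :
    Set (FreeMod (MvPolynomial (Vars m r n) 𝕂) (m + r) n) :=
  {T | ∃ (I : Finset (Fin (m + r))) (J : Finset (Fin n)) (hI : I.card = r + 2)
    (hJ : J.card = r + 2), (I ∩ firstRows m r).card = 2 ∧
    T = rowExp r (Dmat 𝕂 m r n) I J hI hJ 0 - rowExp r (Dmat 𝕂 m r n) I J hI hJ 1}

/-- The `(m+r) × n` matrix obtained by stacking `M_x = ∑ x_ℓ M_ℓ` on top of `C`. -/
noncomputable def MxC (𝕂 : Type*) [Field 𝕂] (m r n K : ℕ)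
    (M : Fin K → Matrix (Fin m) (Fin n) 𝕂) :
    Matrix (Fin (m + r)) (Fin n) (MvPolynomial (XVars K r n) 𝕂) :=
  Matrix.of fun i j =>
    if h : (i : ℕ) < m then ∑ ℓ, C (M ℓ ⟨i, h⟩ j) * X (Sum.inl ℓ)
    else X (Sum.inr (⟨(i : ℕ) - m, by have := i.isLt; omega⟩, j))

/-- The specialization homomorphism `ρ : R → P`, `y_{kj} ↦ m_{kj}(x)`, `c_{ij} ↦ c_{ij}`. -/
noncomputable def rho (𝕂 : Type*) [Field 𝕂] (m r n K : ℕ)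
    (M : Fin K → Matrix (Fin m) (Fin n) 𝕂) :
    MvPolynomial (Vars m r n) 𝕂 →ₐ[𝕂] MvPolynomial (XVars K r n) 𝕂 :=
  aeval fun v => match v with
    | Sum.inl (k, j) => ∑ ℓ, C (M ℓ k j) * X (Sum.inl ℓ)
    | Sum.inr (i, j) => X (Sum.inr (i, j))

end SM

/-! Every Kurano element is a signed sum of entries of `D` placed at positions `E_{I', J'}` whose
row set `I'` is `I` itself (S1) or `I` with one row deleted (S2–S4). So if `{m+1,…,m+r} ⊄ I`, no
position lies in `G`, and S1 always falls into case (i) or (ii). If `{m+1,…,m+r} ⊆ I` and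
`|I| = r + 2`, the first row of `I` is a row of `Y`: deleting it gives a position in `G` with
nonzero coefficient, while deleting a row of `C` gives a position outside `G` whose coefficient
is `± c_{ij}`. S2 and S4 delete every row of `I` somewhere; S3 deletes only the first and the
`h`-th, so it lies in case (i) exactly when the `h`-th row of `I` is a row of `Y`. -/

namespace SM

section Trichotomy

variable {S : Type*} [Zero S] {a b : ℕ}

/-- Cases (i)–(iii) of the theorem: positions `E_{I,J}` with `L ⊆ I` play the role of `G`, and
`Q` is the set of coefficients not involving a `c`-variable. -/
def SupportTrichotomy (L : Finset (Fin a)) (Q : Set S) (T : FreeMod S a b) : Prop :=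
  ((∀ p, T p ≠ 0 → L ⊆ p.1) ∧ ¬ ∀ p, T p ≠ 0 → ¬ L ⊆ p.1) ∨
  ((∀ p, T p ≠ 0 → ¬ L ⊆ p.1) ∧ ¬ ∀ p, T p ≠ 0 → L ⊆ p.1) ∨
  ((¬ ∀ p, T p ≠ 0 → L ⊆ p.1) ∧ (¬ ∀ p, T p ≠ 0 → ¬ L ⊆ p.1) ∧ ∃ p, ¬ L ⊆ p.1 ∧ T p ∉ Q)

variable {L : Finset (Fin a)} {Q : Set S} {T : FreeMod S a b}

theorem SupportTrichotomy.of_iff {p : Finset (Fin a) × Finset (Fin b)} (hp : T p ≠ 0)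
    (h : ∀ q, T q ≠ 0 → (L ⊆ q.1 ↔ L ⊆ p.1)) : SupportTrichotomy L Q T := by
  by_cases hL : L ⊆ p.1
  · exact .inl ⟨fun q hq => (h q hq).2 hL, fun hB => hB p hp hL⟩
  · exact .inr <| .inl ⟨fun q hq => (h q hq).not.2 hL, fun hA => hL (hA p hp)⟩

theorem SupportTrichotomy.of_not_subset {I : Finset (Fin a)} (hL : ¬ L ⊆ I)
    (hsupp : ∀ q, T q ≠ 0 → q.1 ⊆ I) {p : Finset (Fin a) × Finset (Fin b)} (hp : T p ≠ 0) :
    SupportTrichotomy L Q T :=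
  have hout : ∀ q, T q ≠ 0 → ¬ L ⊆ q.1 := fun q hq hq' => hL (hq'.trans (hsupp q hq))
  .of_iff hp fun q hq => iff_of_false (hout q hq) (hout p hp)

theorem SupportTrichotomy.of_mixed (h0 : (0 : S) ∈ Q) {p q : Finset (Fin a) × Finset (Fin b)}
    (hp : T p ≠ 0) (hpL : L ⊆ p.1) (hqL : ¬ L ⊆ q.1) (hq : T q ∉ Q) :
    SupportTrichotomy L Q T :=
  .inr <| .inr ⟨fun hA => hqL (hA q fun h => hq (h ▸ h0)), fun hB => hB p hp hpL, q, hqL, hq⟩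

end Trichotomy

section FreeModule

variable {S : Type*} [CommRing S] {a b : ℕ} {ι : Type*} [Fintype ι]

theorem sum_smul_eVec_apply (c : ι → S) (pos : ι → Finset (Fin a) × Finset (Fin b))
    (x : Finset (Fin a) × Finset (Fin b)) :
    (∑ t, c t • (eVec (pos t) : FreeMod S a b)) x = ∑ t, if x = pos t then c t else 0 := by
  simp [eVec, Finset.sum_apply, Pi.single_apply]

theorem sum_smul_eVec_apply_of_injective (c : ι → S) {pos : ι → Finset (Fin a) × Finset (Fin b)}
    (hpos : Function.Injective pos) (t : ι) :
    (∑ t, c t • (eVec (pos t) : FreeMod S a b)) (pos t) = c t := by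
  rw [sum_smul_eVec_apply, Finset.sum_eq_single t (fun t' _ ht' => if_neg (hpos.ne ht').symm)
    (by simp), if_pos rfl]

theorem sum_smul_eVec_apply_eq_zero (c : ι → S) {pos : ι → Finset (Fin a) × Finset (Fin b)}
    {x : Finset (Fin a) × Finset (Fin b)} (hx : ∀ t, x ≠ pos t) :
    (∑ t, c t • (eVec (pos t) : FreeMod S a b)) x = 0 := by
  rw [sum_smul_eVec_apply]
  simp [hx]

theorem exists_eq_of_sum_smul_eVec_apply_ne_zero (c : ι → S)
    {pos : ι → Finset (Fin a) × Finset (Fin b)} {x : Finset (Fin a) × Finset (Fin b)}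
    (hx : (∑ t, c t • (eVec (pos t) : FreeMod S a b)) x ≠ 0) : ∃ t, x = pos t := by
  by_contra! h
  exact hx (sum_smul_eVec_apply_eq_zero c h)

theorem fst_subset_of_sub_apply_ne_zero {U V : FreeMod S a b} {I : Finset (Fin a)}
    (hU : ∀ x, U x ≠ 0 → x.1 ⊆ I) (hV : ∀ x, V x ≠ 0 → x.1 ⊆ I)
    (x : Finset (Fin a) × Finset (Fin b)) (hx : (U - V) x ≠ 0) : x.1 ⊆ I := by
  by_cases hUx : U x = 0
  · exact hV x fun hVx => hx (by rw [Pi.sub_apply, hUx, hVx, sub_zero])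
  · exact hU x hUx

end FreeModule

theorem erase_orderIsoOfFin_injective {α : Type*} [LinearOrder α] (s : Finset α) {k : ℕ}
    (h : s.card = k) : Function.Injective fun t => s.erase (s.orderIsoOfFin h t) :=
  fun _ _ e => (s.orderIsoOfFin h).injective <| Subtype.ext <|
    (Finset.erase_inj s (s.orderIsoOfFin h _).2).mp e

section Rows

variable {m r : ℕ}

theorem mem_lastRows {i : Fin (m + r)} : i ∈ lastRows m r ↔ m ≤ (i : ℕ) := by
  simp [lastRows]

theorem lastRows_subset_erase_iff {I : Finset (Fin (m + r))} {x : Fin (m + r)} :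
    lastRows m r ⊆ I.erase x ↔ lastRows m r ⊆ I ∧ (x : ℕ) < m := by
  simp [Finset.subset_erase, mem_lastRows]

theorem card_lastRows : (lastRows m r).card = r := by
  have h := Finset.card_filter_add_card_filter_not (s := Finset.univ)
    (fun i : Fin (m + r) => (i : ℕ) < m)
  simp only [Fin.card_filter_val_lt, Finset.card_univ, Fintype.card_fin, not_lt] at h
  rw [lastRows]
  omega

theorem orderIsoOfFin_zero_lt (I : Finset (Fin (m + r))) (hI : I.card = r + 2) :
    ((I.orderIsoOfFin hI 0 : Fin (m + r)) : ℕ) < m := by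
  obtain ⟨x, hxI, hx⟩ : ∃ x ∈ I, (x : ℕ) < m := by
    by_contra! h
    have := Finset.card_le_card fun x hx => mem_lastRows.2 (h x hx)
    rw [card_lastRows] at this
    omega
  have : I.orderIsoOfFin hI 0 ≤ ⟨x, hxI⟩ := by
    simpa only [OrderIso.apply_symm_apply] using
      (I.orderIsoOfFin hI).monotone (Fin.zero_le ((I.orderIsoOfFin hI).symm ⟨x, hxI⟩))
  exact lt_of_le_of_lt this hx

theorem exists_ne_zero_le_orderIsoOfFin (hr : 0 < r) (I : Finset (Fin (m + r)))
    (hI : I.card = r + 2) (hL : lastRows m r ⊆ I) :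
    ∃ s ≠ 0, m ≤ ((I.orderIsoOfFin hI s : Fin (m + r)) : ℕ) := by
  have hmI : (⟨m, by omega⟩ : Fin (m + r)) ∈ I := hL (mem_lastRows.2 le_rfl)
  refine ⟨(I.orderIsoOfFin hI).symm ⟨_, hmI⟩, fun h0 => ?_, by simp⟩
  have := orderIsoOfFin_zero_lt I hI
  rw [← h0] at this
  simp at this

end Rows

section Expansions

variable {S : Type*} [CommRing S] {a b r : ℕ} (A : Matrix (Fin a) (Fin b) S)
  {I : Finset (Fin a)} {J : Finset (Fin b)}

theorem s1El_apply_self (i : Fin a) (hJ : J.card = r + 2) (t : Fin (r + 2)) :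
    s1El r A i I J hJ (I, J.erase (J.orderIsoOfFin hJ t)) =
      (-1) ^ (t : ℕ) * A i (J.orderIsoOfFin hJ t) :=
  sum_smul_eVec_apply_of_injective _
    (fun _ _ e => erase_orderIsoOfFin_injective J hJ (Prod.ext_iff.1 e).2) t

theorem fst_eq_of_s1El_apply_ne_zero {i : Fin a} {hJ : J.card = r + 2}
    {x : Finset (Fin a) × Finset (Fin b)} (hx : s1El r A i I J hJ x ≠ 0) : x.1 = I := by
  obtain ⟨t, rfl⟩ := exists_eq_of_sum_smul_eVec_apply_ne_zero _ hx
  rfl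

theorem s2El_apply_self (j : Fin b) (hI : I.card = r + 2) (s : Fin (r + 2)) :
    s2El r A j I J hI (I.erase (I.orderIsoOfFin hI s), J) =
      (-1) ^ (s : ℕ) * A (I.orderIsoOfFin hI s) j :=
  sum_smul_eVec_apply_of_injective _
    (fun _ _ e => erase_orderIsoOfFin_injective I hI (Prod.ext_iff.1 e).1) s

theorem fst_subset_of_s2El_apply_ne_zero {j : Fin b} {hI : I.card = r + 2}
    {x : Finset (Fin a) × Finset (Fin b)} (hx : s2El r A j I J hI x ≠ 0) : x.1 ⊆ I := by
  obtain ⟨s, rfl⟩ := exists_eq_of_sum_smul_eVec_apply_ne_zero _ hx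
  exact Finset.erase_subset _ _

variable (hI : I.card = r + 2) (hJ : J.card = r + 2)

theorem rowExp_apply_self (p t : Fin (r + 2)) :
    rowExp r A I J hI hJ p (I.erase (I.orderIsoOfFin hI p), J.erase (J.orderIsoOfFin hJ t)) =
      (-1) ^ ((p : ℕ) + (t : ℕ)) * A (I.orderIsoOfFin hI p) (J.orderIsoOfFin hJ t) :=
  sum_smul_eVec_apply_of_injective _
    (fun _ _ e => erase_orderIsoOfFin_injective J hJ (Prod.ext_iff.1 e).2) t

theorem rowExp_apply_of_fst_ne {p : Fin (r + 2)} {x : Finset (Fin a) × Finset (Fin b)}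
    (hx : x.1 ≠ I.erase (I.orderIsoOfFin hI p)) : rowExp r A I J hI hJ p x = 0 :=
  sum_smul_eVec_apply_eq_zero _ fun _ e => hx (congrArg Prod.fst e)

theorem fst_subset_of_rowExp_apply_ne_zero {p : Fin (r + 2)}
    {x : Finset (Fin a) × Finset (Fin b)} (hx : rowExp r A I J hI hJ p x ≠ 0) : x.1 ⊆ I := by
  obtain ⟨t, rfl⟩ := exists_eq_of_sum_smul_eVec_apply_ne_zero _ hx
  exact Finset.erase_subset _ _

theorem colExp_apply_self (s q : Fin (r + 2)) :
    colExp r A I J hI hJ q (I.erase (I.orderIsoOfFin hI s), J.erase (J.orderIsoOfFin hJ q)) =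
      (-1) ^ ((s : ℕ) + (q : ℕ)) * A (I.orderIsoOfFin hI s) (J.orderIsoOfFin hJ q) :=
  sum_smul_eVec_apply_of_injective _
    (fun _ _ e => erase_orderIsoOfFin_injective I hI (Prod.ext_iff.1 e).1) s

theorem colExp_apply_of_snd_ne {q : Fin (r + 2)} {x : Finset (Fin a) × Finset (Fin b)}
    (hx : x.2 ≠ J.erase (J.orderIsoOfFin hJ q)) : colExp r A I J hI hJ q x = 0 :=
  sum_smul_eVec_apply_eq_zero _ fun _ e => hx (congrArg Prod.snd e)

theorem fst_subset_of_colExp_apply_ne_zero {q : Fin (r + 2)}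
    {x : Finset (Fin a) × Finset (Fin b)} (hx : colExp r A I J hI hJ q x ≠ 0) : x.1 ⊆ I := by
  obtain ⟨s, rfl⟩ := exists_eq_of_sum_smul_eVec_apply_ne_zero _ hx
  exact Finset.erase_subset _ _

end Expansions

section Kurano

variable {S : Type*} [CommRing S] {m r n : ℕ} {A : Matrix (Fin (m + r)) (Fin n) S}

theorem neg_one_pow_mul_mem_iff (Q : AddSubgroup S) (k : ℕ) {x : S} :
    (-1) ^ k * x ∈ Q ↔ x ∈ Q := by
  rcases neg_one_pow_eq_or S k with h | h <;> simp [h]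

theorem supportTrichotomy_of_erase {Q : AddSubgroup S} {T : FreeMod S (m + r) n}
    {I : Finset (Fin (m + r))} (hL : lastRows m r ⊆ I) {x y : Fin (m + r)} (hx : (x : ℕ) < m)
    (hy : m ≤ (y : ℕ)) {J₀ J₁ : Finset (Fin n)} (hp : T (I.erase x, J₀) ≠ 0)
    (hq : T (I.erase y, J₁) ∉ Q) : SupportTrichotomy (lastRows m r) (Q : Set S) T :=
  .of_mixed Q.zero_mem hp (lastRows_subset_erase_iff.2 ⟨hL, hx⟩)
    (fun h => (lastRows_subset_erase_iff.1 h).2.not_ge hy) hq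

variable (hA : ∀ i j, A i j ≠ 0)
include hA

theorem supportTrichotomy_s1El {Q : Set S} (i : Fin (m + r)) (I : Finset (Fin (m + r)))
    (J : Finset (Fin n)) (hJ : J.card = r + 2) :
    SupportTrichotomy (lastRows m r) Q (s1El r A i I J hJ) := by
  have hp : s1El r A i I J hJ (I, J.erase (J.orderIsoOfFin hJ 0)) ≠ 0 := by
    rw [s1El_apply_self]
    exact neg_one_pow_mul_eq_zero_iff.not.2 (hA _ _)
  exact .of_iff hp fun q hq => by rw [fst_eq_of_s1El_apply_ne_zero A hq]

variable {Q : AddSubgroup S} (hAQ : ∀ (i : Fin (m + r)) j, m ≤ (i : ℕ) → A i j ∉ Q)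
include hAQ

theorem supportTrichotomy_s2El (hr : 0 < r) (j : Fin n) (I : Finset (Fin (m + r)))
    (J : Finset (Fin n)) (hI : I.card = r + 2) :
    SupportTrichotomy (lastRows m r) (Q : Set S) (s2El r A j I J hI) := by
  have hp : s2El r A j I J hI (I.erase (I.orderIsoOfFin hI 0), J) ≠ 0 := by
    rw [s2El_apply_self]
    exact neg_one_pow_mul_eq_zero_iff.not.2 (hA _ _)
  by_cases hL : lastRows m r ⊆ I
  · obtain ⟨s, -, hs⟩ := exists_ne_zero_le_orderIsoOfFin hr I hI hL
    refine supportTrichotomy_of_erase hL (orderIsoOfFin_zero_lt I hI) hs hp (J₁ := J) ?_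
    rw [s2El_apply_self, neg_one_pow_mul_mem_iff]
    exact hAQ _ _ hs
  · exact .of_not_subset hL (fun _ => fst_subset_of_s2El_apply_ne_zero A) hp

variable {I : Finset (Fin (m + r))} {J : Finset (Fin n)} (hI : I.card = r + 2)
  (hJ : J.card = r + 2)

theorem supportTrichotomy_rowExp_sub_rowExp {h : Fin (r + 2)} (hh : 1 ≤ (h : ℕ)) :
    SupportTrichotomy (lastRows m r) (Q : Set S)
      (rowExp r A I J hI hJ 0 - rowExp r A I J hI hJ h) := by
  have hne : I.erase (I.orderIsoOfFin hI 0) ≠ I.erase (I.orderIsoOfFin hI h) :=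
    (erase_orderIsoOfFin_injective I hI).ne fun e => by simp [← e] at hh
  have hp : (rowExp r A I J hI hJ 0 - rowExp r A I J hI hJ h)
      (I.erase (I.orderIsoOfFin hI 0), J.erase (J.orderIsoOfFin hJ 0)) ≠ 0 := by
    rw [Pi.sub_apply, rowExp_apply_self, rowExp_apply_of_fst_ne A hI hJ hne, sub_zero]
    exact neg_one_pow_mul_eq_zero_iff.not.2 (hA _ _)
  have h0 := orderIsoOfFin_zero_lt I hI
  by_cases hL : lastRows m r ⊆ I
  · by_cases hih : m ≤ ((I.orderIsoOfFin hI h : Fin (m + r)) : ℕ)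
    · refine supportTrichotomy_of_erase hL h0 hih hp (J₁ := J.erase (J.orderIsoOfFin hJ 0)) ?_
      rw [Pi.sub_apply, rowExp_apply_of_fst_ne A hI hJ hne.symm, rowExp_apply_self, zero_sub,
        neg_mem_iff, neg_one_pow_mul_mem_iff]
      exact hAQ _ _ hih
    · have hsupp : ∀ x, (rowExp r A I J hI hJ 0 - rowExp r A I J hI hJ h) x ≠ 0 →
          lastRows m r ⊆ x.1 := by
        intro x hx
        by_cases e : x.1 = I.erase (I.orderIsoOfFin hI 0)
        · exact e ▸ lastRows_subset_erase_iff.2 ⟨hL, h0⟩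
        have e' : x.1 = I.erase (I.orderIsoOfFin hI h) := by
          by_contra e'
          exact hx (by rw [Pi.sub_apply, rowExp_apply_of_fst_ne A hI hJ e,
            rowExp_apply_of_fst_ne A hI hJ e', sub_zero])
        exact e' ▸ lastRows_subset_erase_iff.2 ⟨hL, not_le.1 hih⟩
      exact .of_iff hp fun x hx => iff_of_true (hsupp x hx) (hsupp _ hp)
  · exact .of_not_subset hL (fst_subset_of_sub_apply_ne_zero
      (fun _ => fst_subset_of_rowExp_apply_ne_zero A hI hJ)
      (fun _ => fst_subset_of_rowExp_apply_ne_zero A hI hJ)) hp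

theorem supportTrichotomy_rowExp_sub_colExp (hr : 0 < r) {k : Fin (r + 2)} (hk : 1 ≤ (k : ℕ)) :
    SupportTrichotomy (lastRows m r) (Q : Set S)
      (rowExp r A I J hI hJ 0 - colExp r A I J hI hJ k) := by
  have hne : J.erase (J.orderIsoOfFin hJ 0) ≠ J.erase (J.orderIsoOfFin hJ k) :=
    (erase_orderIsoOfFin_injective J hJ).ne fun e => by simp [← e] at hk
  have hp : (rowExp r A I J hI hJ 0 - colExp r A I J hI hJ k)
      (I.erase (I.orderIsoOfFin hI 0), J.erase (J.orderIsoOfFin hJ 0)) ≠ 0 := by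
    rw [Pi.sub_apply, rowExp_apply_self, colExp_apply_of_snd_ne A hI hJ hne, sub_zero]
    exact neg_one_pow_mul_eq_zero_iff.not.2 (hA _ _)
  by_cases hL : lastRows m r ⊆ I
  · obtain ⟨s, hs0, hs⟩ := exists_ne_zero_le_orderIsoOfFin hr I hI hL
    have hIne : I.erase (I.orderIsoOfFin hI s) ≠ I.erase (I.orderIsoOfFin hI 0) :=
      (erase_orderIsoOfFin_injective I hI).ne hs0
    refine supportTrichotomy_of_erase hL (orderIsoOfFin_zero_lt I hI) hs hp
      (J₁ := J.erase (J.orderIsoOfFin hJ k)) ?_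
    rw [Pi.sub_apply, rowExp_apply_of_fst_ne A hI hJ hIne, colExp_apply_self, zero_sub,
      neg_mem_iff, neg_one_pow_mul_mem_iff]
    exact hAQ _ _ hs
  · exact .of_not_subset hL (fst_subset_of_sub_apply_ne_zero
      (fun _ => fst_subset_of_rowExp_apply_ne_zero A hI hJ)
      (fun _ => fst_subset_of_colExp_apply_ne_zero A hI hJ)) hp

end Kurano

variable {𝕂 : Type*} [Field 𝕂] {m r n : ℕ}

theorem Dmat_ne_zero (i : Fin (m + r)) (j : Fin n) : Dmat 𝕂 m r n i j ≠ 0 := by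
  rw [Dmat, Matrix.of_apply]
  split <;> exact X_ne_zero _

theorem Dmat_notMem_supported_inl {i : Fin (m + r)} (hi : m ≤ (i : ℕ)) (j : Fin n) :
    Dmat 𝕂 m r n i j ∉ supported 𝕂 (Set.range Sum.inl) := by
  simp [Dmat, Nat.not_lt.2 hi, X_mem_supported]

end SM

open SM in
theorem stmt_6_general (𝕂 : Type*) [Field 𝕂] (m r n : ℕ) (hr : 0 < r)
    (T : FreeMod (MvPolynomial (Vars m r n) 𝕂) (m + r) n)
    (hT : T ∈ S1Set r (Dmat 𝕂 m r n) ∪ S2Set r (Dmat 𝕂 m r n) ∪ S3Set r (Dmat 𝕂 m r n) ∪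
        S4Set r (Dmat 𝕂 m r n)) :
    ((∀ p, T p ≠ 0 → lastRows m r ⊆ p.1) ∧ ¬ (∀ p, T p ≠ 0 → ¬ lastRows m r ⊆ p.1)) ∨
    ((∀ p, T p ≠ 0 → ¬ lastRows m r ⊆ p.1) ∧ ¬ (∀ p, T p ≠ 0 → lastRows m r ⊆ p.1)) ∨
    (¬ (∀ p, T p ≠ 0 → lastRows m r ⊆ p.1) ∧ ¬ (∀ p, T p ≠ 0 → ¬ lastRows m r ⊆ p.1) ∧
      ∃ p : Finset (Fin (m + r)) × Finset (Fin n), ¬ lastRows m r ⊆ p.1 ∧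
        T p ∉ MvPolynomial.supported 𝕂 (Set.range Sum.inl)) := by
  let Q := (supported 𝕂 (Set.range (Sum.inl : _ → Vars m r n))).toSubring.toAddSubgroup
  have hA : ∀ i j, Dmat 𝕂 m r n i j ≠ 0 := Dmat_ne_zero
  have hAQ : ∀ (i : Fin (m + r)) j, m ≤ (i : ℕ) → Dmat 𝕂 m r n i j ∉ Q :=
    fun _ j hi => Dmat_notMem_supported_inl hi j
  show SupportTrichotomy (lastRows m r) (Q : Set _) T
  rcases hT with ((⟨I, J, -, hJ, i, -, rfl⟩ | ⟨I, J, hI, -, j, -, rfl⟩) |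
    ⟨I, J, hI, hJ, h, hh, rfl⟩) | ⟨I, J, hI, hJ, k, hk, rfl⟩
  · exact supportTrichotomy_s1El hA i I J hJ
  · exact supportTrichotomy_s2El hA hAQ hr j I J hI
  · exact supportTrichotomy_rowExp_sub_rowExp hA hAQ hI hJ hh
  · exact supportTrichotomy_rowExp_sub_colExp hA hAQ hI hJ hr hk

open SM in
/-- Every element `S` of `S1 ∪ S2 ∪ S3 ∪ S4` falls into exactly one of the
following mutually exclusive cases:
(i) `S` is supported only on basis vectors `E_{I,J}` with `{m+1,…,m+r} ⊆ I`;
(ii) `S` is supported only on basis vectors `E_{I,J}` with `{m+1,…,m+r} ⊄ I`;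
(iii) neither (i) nor (ii) holds, and some coefficient of `S` at a basis vector `E_{I,J}` with
`{m+1,…,m+r} ⊄ I` involves a `c`-variable (does not lie in the subring generated by the
`y`-variables). -/
theorem stmt_6 (𝕂 : Type*) [Field 𝕂] (m r n : ℕ) (hm : 0 < m) (hr : 0 < r) (hrn : r ≤ n)
    (T : FreeMod (MvPolynomial (Vars m r n) 𝕂) (m + r) n)
    (hT : T ∈ S1Set r (Dmat 𝕂 m r n) ∪ S2Set r (Dmat 𝕂 m r n) ∪ S3Set r (Dmat 𝕂 m r n) ∪
        S4Set r (Dmat 𝕂 m r n)) :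
    ((∀ p, T p ≠ 0 → lastRows m r ⊆ p.1) ∧ ¬ (∀ p, T p ≠ 0 → ¬ lastRows m r ⊆ p.1)) ∨
    ((∀ p, T p ≠ 0 → ¬ lastRows m r ⊆ p.1) ∧ ¬ (∀ p, T p ≠ 0 → lastRows m r ⊆ p.1)) ∨
    (¬ (∀ p, T p ≠ 0 → lastRows m r ⊆ p.1) ∧ ¬ (∀ p, T p ≠ 0 → ¬ lastRows m r ⊆ p.1) ∧
      ∃ p : Finset (Fin (m + r)) × Finset (Fin n), ¬ lastRows m r ⊆ p.1 ∧
        T p ∉ MvPolynomial.supported 𝕂 (Set.range Sum.inl)) :=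
  stmt_6_general 𝕂 m r n hr T hT
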